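/- arXiv:2006.15556 — 4 statements merged into one kernel-verified Lean document; each statement's English description precedes it below -/
import Mathlib

section
/- Let N_n denote the number of elements of the semigroup P_n of partial automorphisms of the n-level binary rooted tree (equivalently, of the n-th partial wreath power of the symmetric inverse semigroup on two points). Then N_n = 2^{2^{n+1}-1} - 1 for every n ≥ 1. -/
open scoped BigOperators

/-- A partial automorphism of the `n`-level binary rooted tree.  Vertices of the tree are
encoded as binary strings of length at most `n`: the root is the empty string and the two
children of a vertex `l` are `l ++ [b]` for `b : Bool`.  A partial automorphism is an
injective partial map (with `none` standing for "undefined") whose domain is a subtree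
containing the root, which fixes the root and maps children of a vertex in its domain to
children of its image; equivalently, it is an isomorphism between two subtrees
containing the root. -/
structure PartialAut (n : ℕ) where
  toFun : List Bool → Option (List Bool)
  length_le : ∀ l m, toFun l = some m → l.length ≤ n
  root_map : toFun [] = some []
  child_map : ∀ l b m, toFun (l ++ [b]) = some m →
      ∃ u b', toFun l = some u ∧ m = u ++ [b']
  inj : ∀ l l' m, toFun l = some m → toFun l' = some m → l = l'

namespace PartialAut

variable {n : ℕ}

theorem ext' {x y : PartialAut n} (h : x.toFun = y.toFun) : x = y := by
  cases x; cases y; cases h; rfl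

theorem toFun_eq_none {x : PartialAut n} {l : List Bool} (h : ¬ l.length ≤ n) :
    x.toFun l = none := by
  cases hx : x.toFun l with
  | none => rfl
  | some m => exact absurd (x.length_le l m hx) h

theorem length_map {x : PartialAut n} : ∀ l m : List Bool, x.toFun l = some m →
    m.length = l.length := by
  intro l
  induction l using List.reverseRecOn with
  | nil => intro m h; rw [x.root_map] at h; cases h; rfl
  | append_singleton l b ih =>
      intro m h
      obtain ⟨u, b', hu, rfl⟩ := x.child_map l b m h
      simp [ih u hu]

/-- Composition of partial automorphisms (first apply `x`, then `y`), together with the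
identity automorphism, makes `PartialAut n` a monoid (in particular a semigroup). -/
instance : Monoid (PartialAut n) where
  mul x y :=
    { toFun := fun l => (x.toFun l).bind y.toFun
      length_le := by
        intro l m h
        try dsimp only at h
        cases hx : x.toFun l with
        | none => rw [hx] at h; cases h
        | some k => exact x.length_le l k hx
      root_map := by (try dsimp only); rw [x.root_map]; simpa using y.root_map
      child_map := by
        intro l b m h
        try dsimp only at h ⊢
        cases hx : x.toFun (l ++ [b]) with
        | none => rw [hx] at h; cases h
        | some k =>
          rw [hx, Option.bind_some] at h
          obtain ⟨u, b', hu, rfl⟩ := x.child_map l b k hx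
          obtain ⟨w, b'', hw, rfl⟩ := y.child_map u b' m h
          exact ⟨w, b'', by rw [hu, Option.bind_some, hw], rfl⟩
      inj := by
        intro l l' m h h'
        try dsimp only at h h'
        cases hx : x.toFun l with
        | none => rw [hx] at h; cases h
        | some k =>
          cases hx' : x.toFun l' with
          | none => rw [hx'] at h'; cases h'
          | some k' =>
            rw [hx, Option.bind_some] at h
            rw [hx', Option.bind_some] at h'
            have hkk : k = k' := y.inj k k' m h h'
            subst hkk
            exact x.inj l l' k hx hx' }
  one :=
    { toFun := fun l => if l.length ≤ n then some l else none
      length_le := by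
        intro l m h
        try dsimp only at h
        split at h
        · assumption
        · cases h
      root_map := by simp
      child_map := by
        intro l b m h
        try dsimp only at h ⊢
        split at h
        · cases h
          have hl : l.length ≤ n := by
            simp only [List.length_append, List.length_cons, List.length_nil] at *
            omega
          exact ⟨l, b, by simp [hl], rfl⟩
        · cases h
      inj := by
        intro l l' m h h'
        try dsimp only at h h'
        split at h
        · cases h
          split at h'
          · cases h'; rfl
          · cases h'
        · cases h }
  mul_assoc x y z := ext' (funext fun l => Option.bind_assoc _ _ _)
  one_mul x := by
    apply ext'
    funext l
    by_cases hl : l.length ≤ n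
    · show (if l.length ≤ n then some l else none).bind x.toFun = x.toFun l
      simp [hl]
    · show (if l.length ≤ n then some l else none).bind x.toFun = x.toFun l
      simp [hl, toFun_eq_none hl]
  mul_one x := by
    apply ext'
    funext l
    show (x.toFun l).bind (fun m => if m.length ≤ n then some m else none) = x.toFun l
    cases hx : x.toFun l with
    | none => rfl
    | some m =>
      have hm : m.length ≤ n := (length_map l m hx) ▸ x.length_le l m hx
      simp [hm]

@[simp] theorem mul_toFun (x y : PartialAut n) (l : List Bool) :
    (x * y).toFun l = (x.toFun l).bind y.toFun := rfl

@[simp] theorem one_toFun (l : List Bool) :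
    (1 : PartialAut n).toFun l = if l.length ≤ n then some l else none := rfl

instance : Finite (PartialAut n) := by
  haveI hV : Finite {l : List Bool // l.length ≤ n} := (List.finite_length_le Bool n).to_subtype
  haveI := Fintype.ofFinite {l : List Bool // l.length ≤ n}
  apply Finite.of_injective
    (fun (x : PartialAut n) (v : {l : List Bool // l.length ≤ n}) =>
      (x.toFun v.1).bind fun m => if hm : m.length ≤ n then
        some (⟨m, hm⟩ : {l : List Bool // l.length ≤ n}) else none)
  intro x y h
  apply ext'
  funext l
  by_cases hl : l.length ≤ n
  · have h' := congrFun h ⟨l, hl⟩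
    dsimp only at h'
    cases hx : x.toFun l with
    | none =>
      cases hy : y.toFun l with
      | none => rfl
      | some m =>
        have hm : m.length ≤ n := (length_map l m hy) ▸ y.length_le l m hy
        rw [hx, hy] at h'
        simp [hm] at h'
    | some m =>
      have hm : m.length ≤ n := (length_map l m hx) ▸ x.length_le l m hx
      cases hy : y.toFun l with
      | none =>
        rw [hx, hy] at h'
        simp [hm] at h'
      | some k =>
        have hk : k.length ≤ n := (length_map l k hy) ▸ y.length_le l k hy
        rw [hx, hy] at h'
        simp only [Option.bind_some, hm, hk, dif_pos] at h'
        rw [Option.some_inj, Subtype.mk.injEq] at h'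
        rw [h']
  · rw [toFun_eq_none hl, toFun_eq_none hl]

noncomputable instance : Fintype (PartialAut n) := Fintype.ofFinite _

end PartialAut

/-- The set of vertices of the `n`-th (bottom) level of the `n`-level binary rooted tree. -/
def Leaf (n : ℕ) : Type := {l : List Bool // l.length = n}

instance (n : ℕ) : DecidableEq (Leaf n) := fun a b =>
  decidable_of_iff (a.1 = b.1) Subtype.ext_iff.symm

instance (n : ℕ) : Finite (Leaf n) := by
  have : Finite {l : List Bool // l.length = n} := (List.finite_length_eq Bool n).to_subtype
  exact this

noncomputable instance (n : ℕ) : Fintype (Leaf n) := Fintype.ofFinite _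

/-- The domain of a partial automorphism. -/
def PartialAut.dom {n : ℕ} (x : PartialAut n) : Set (List Bool) := {l | x.toFun l ≠ none}

/-- `N_n`, the number of elements of the semigroup `P_n`. -/
noncomputable def Nn (n : ℕ) : ℕ := Nat.card (PartialAut n)

/-- `S_n(x)`: the bottom-level vertices surviving all iterates of `x`. -/
def survSet {n : ℕ} (x : PartialAut n) : Set (List Bool) :=
  {l | l.length = n ∧ ∀ m : ℕ, 1 ≤ m → l ∈ (x ^ m).dom}

/-- The ultimate rank `rk_n(x) = |S_n(x)|`. -/
noncomputable def urk {n : ℕ} (x : PartialAut n) : ℕ := Nat.card (survSet x)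

/-- The total ultimate rank `R_n`. -/
noncomputable def Rn (n : ℕ) : ℕ := ∑ x : PartialAut n, urk x

/-- `rank_n(x) = |dom(x) ∩ B_n|`. -/
noncomputable def lrank {n : ℕ} (x : PartialAut n) : ℕ :=
  Nat.card {l : List Bool | l ∈ x.dom ∧ l.length = n}

/-- The total rank `R'_n`. -/
noncomputable def Rn' (n : ℕ) : ℕ := ∑ x : PartialAut n, lrank x

/-- The action matrix `A_x` of `x` on the bottom level of the tree. -/
noncomputable def actionMatrix {n : ℕ} (x : PartialAut n) : Matrix (Leaf n) (Leaf n) ℂ :=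
  fun i j => if x.toFun i.1 = some j.1 then 1 else 0

/-- The multiset of eigenvalues (with multiplicity) of the action matrix of `x`,
i.e. the roots of its characteristic polynomial. -/
noncomputable def eigenvalues {n : ℕ} (x : PartialAut n) : Multiset ℂ :=
  (actionMatrix x).charpoly.roots

/-- `∫_D f dΞ_n` for the empirical eigenvalue measure
`Ξ_n = 2^{-n} ∑_k δ_{λ_k}` of `x`. -/
noncomputable def specInt {n : ℕ} (x : PartialAut n) (f : ℂ → ℂ) : ℂ :=
  (2 ^ n : ℂ)⁻¹ * ((eigenvalues x).map f).sum

/-- `p_n = R_n / (2^n N_n)`. -/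
noncomputable def pn (n : ℕ) : ℝ := (Rn n : ℝ) / (2 ^ n * Nn n)

/-- The idempotent partial automorphism which is the identity on `dom x`. -/
def PartialAut.domIdem {n : ℕ} (x : PartialAut n) : PartialAut n where
  toFun l := if x.toFun l = none then none else some l
  length_le := by
    intro l m h
    try dsimp only at h
    split at h
    · cases h
    · next hx =>
      cases hk : x.toFun l with
      | none => exact absurd hk hx
      | some k => exact x.length_le l k hk
  root_map := by simp [x.root_map]
  child_map := by
    intro l b m h
    try dsimp only at h ⊢
    split at h
    · cases h
    · next hx =>
      cases h
      cases hk : x.toFun (l ++ [b]) with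
      | none => exact absurd hk hx
      | some k =>
        obtain ⟨u, b', hu, _⟩ := x.child_map l b k hk
        exact ⟨l, b, by simp [hu], rfl⟩
  inj := by
    intro l l' m h h'
    try dsimp only at h h'
    split at h
    · cases h
    · cases h
      split at h'
      · cases h'
      · cases h'; rfl

namespace CardProof

variable {n : ℕ}

/-- If `b :: l` is in the domain, so is `[b]`. -/
theorem prefix_dom (x : PartialAut n) (b : Bool) :
    ∀ l m, x.toFun (b :: l) = some m → (x.toFun [b]).isSome := by
  intro l
  induction l using List.reverseRecOn with
  | nil => intro m h; rw [h]; rfl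
  | append_singleton l b' ih =>
      intro m h
      have h' : x.toFun ((b :: l) ++ [b']) = some m := by simpa using h
      obtain ⟨u, b'', hu, _⟩ := x.child_map _ _ _ h'
      exact ih u hu

/-- The image of `[b]` is a singleton. -/
theorem head_map (x : PartialAut n) (b : Bool) {m : List Bool}
    (h : x.toFun [b] = some m) : ∃ c, m = [c] := by
  have := PartialAut.length_map [b] m h
  exact List.length_eq_one_iff.mp this

/-- If `[b] ↦ [c]` then every image of `b :: l` starts with `c`. -/
theorem head_eq (x : PartialAut n) (b c : Bool) (hb : x.toFun [b] = some [c]) :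
    ∀ l m, x.toFun (b :: l) = some m → ∃ m', m = c :: m' := by
  intro l
  induction l using List.reverseRecOn with
  | nil =>
      intro m h
      rw [hb] at h
      exact ⟨[], (Option.some_injective _ h).symm⟩
  | append_singleton l b' ih =>
      intro m h
      have h' : x.toFun ((b :: l) ++ [b']) = some m := by simpa using h
      obtain ⟨u, b'', hu, rfl⟩ := x.child_map _ _ _ h'
      obtain ⟨u', rfl⟩ := ih u hu
      exact ⟨u' ++ [b''], rfl⟩

/-- Restriction of a partial automorphism to the subtree at the child `b`. -/
def restrict (x : PartialAut (n + 1)) (b : Bool) (h : (x.toFun [b]).isSome) :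
    PartialAut n where
  toFun l := (x.toFun (b :: l)).map List.tail
  length_le := by
    intro l m hl
    simp only [Option.map_eq_some_iff] at hl
    obtain ⟨k, hk, _⟩ := hl
    have := x.length_le _ _ hk
    simp only [List.length_cons] at this
    omega
  root_map := by
    obtain ⟨k, hk⟩ := Option.isSome_iff_exists.mp h
    obtain ⟨c, rfl⟩ := head_map x b hk
    show (x.toFun [b]).map List.tail = some []
    rw [hk]; rfl
  child_map := by
    intro l b' m hm
    simp only [Option.map_eq_some_iff] at hm
    obtain ⟨M, hM, rfl⟩ := hm
    have hM' : x.toFun ((b :: l) ++ [b']) = some M := by simpa using hM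
    obtain ⟨u, b'', hu, rfl⟩ := x.child_map _ _ _ hM'
    have hu_len : u.length = l.length + 1 := by
      simpa using PartialAut.length_map _ _ hu
    obtain ⟨c, u', rfl⟩ : ∃ c u', u = c :: u' := by
      cases u with
      | nil => simp at hu_len
      | cons c u' => exact ⟨c, u', rfl⟩
    refine ⟨u', b'', ?_, ?_⟩
    · show (x.toFun (b :: l)).map List.tail = some u'
      rw [hu]; rfl
    · rfl
  inj := by
    intro l l' m hl hl'
    obtain ⟨k, hk⟩ := Option.isSome_iff_exists.mp h
    obtain ⟨c, rfl⟩ := head_map x b hk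
    simp only [Option.map_eq_some_iff] at hl hl'
    obtain ⟨M, hM, rfl⟩ := hl
    obtain ⟨M', hM', htail⟩ := hl'
    obtain ⟨m1, rfl⟩ := head_eq x b c hk _ _ hM
    obtain ⟨m2, rfl⟩ := head_eq x b c hk _ _ hM'
    simp only [List.tail_cons] at htail
    subst htail
    have h2 := x.inj _ _ _ hM hM'
    simp only [List.cons.injEq, true_and] at h2
    exact h2

/-- Gluing two (optional) partial automorphisms under a root permutation `ε`. -/
def glue (ε : Bool) (a : Bool → Option (PartialAut n)) : PartialAut (n + 1) where
  toFun l :=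
    match l with
    | [] => some []
    | b :: l' => (a b).bind fun y => (y.toFun l').map (fun m => (xor b ε) :: m)
  length_le := by
    intro l m h
    match l with
    | [] => simp
    | b :: l' =>
      simp only [Option.bind_eq_some_iff, Option.map_eq_some_iff] at h
      obtain ⟨y, _, k, hk, _⟩ := h
      have := y.length_le _ _ hk
      simp only [List.length_cons]
      omega
  root_map := rfl
  child_map := by
    intro l b' m h
    match l with
    | [] =>
      simp only [List.nil_append] at h ⊢
      simp only [Option.bind_eq_some_iff, Option.map_eq_some_iff] at h
      obtain ⟨y, hy, k, hk, rfl⟩ := h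
      rw [y.root_map] at hk
      cases hk
      exact ⟨[], xor b' ε, rfl, rfl⟩
    | b :: l'' =>
      simp only [List.cons_append] at h
      simp only [Option.bind_eq_some_iff, Option.map_eq_some_iff] at h
      obtain ⟨y, hy, k, hk, rfl⟩ := h
      obtain ⟨u, b'', hu, rfl⟩ := y.child_map _ _ _ hk
      refine ⟨xor b ε :: u, b'', ?_, rfl⟩
      show (a b).bind (fun y => (y.toFun l'').map (fun m => (xor b ε) :: m))
          = some (xor b ε :: u)
      rw [hy, Option.bind_some, hu, Option.map_some]
  inj := by
    intro l l' m h h'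
    match l, l' with
    | [], [] => rfl
    | [], b :: l₂ =>
      simp only at h
      cases h
      simp only [Option.bind_eq_some_iff, Option.map_eq_some_iff] at h'
      obtain ⟨y, hy, k, hk, hcons⟩ := h'
      cases hcons
    | b :: l₂, [] =>
      simp only at h'
      cases h'
      simp only [Option.bind_eq_some_iff, Option.map_eq_some_iff] at h
      obtain ⟨y, hy, k, hk, hcons⟩ := h
      cases hcons
    | b :: l₂, b' :: l₂' =>
      simp only [Option.bind_eq_some_iff, Option.map_eq_some_iff] at h h'
      obtain ⟨y, hy, k, hk, hck⟩ := h
      obtain ⟨y', hy', k', hk', hck'⟩ := h'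
      rw [← hck'] at hck
      have hb : b = b' := by
        have hxor : xor b ε = xor b' ε := by injection hck
        cases b <;> cases b' <;> cases ε <;> simp_all
      subst hb
      rw [hy] at hy'
      cases hy'
      have hkk : k = k' := by injection hck
      subst hkk
      have h2 := y.inj _ _ _ hk hk'
      rw [h2]

@[simp] theorem glue_nil (ε : Bool) (a : Bool → Option (PartialAut n)) :
    (glue ε a).toFun [] = some [] := rfl

@[simp] theorem glue_cons (ε : Bool) (a : Bool → Option (PartialAut n))
    (b : Bool) (l : List Bool) :
    (glue ε a).toFun (b :: l)
      = (a b).bind fun y => (y.toFun l).map (fun m => (xor b ε) :: m) := rfl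

@[simp] theorem restrict_toFun (x : PartialAut (n + 1)) (b : Bool)
    (h : (x.toFun [b]).isSome) (l : List Bool) :
    (restrict x b h).toFun l = (x.toFun (b :: l)).map List.tail := rfl

/-- The root permutation bit of `x`. -/
def epsilon (x : PartialAut (n + 1)) : Bool :=
  decide (x.toFun [false] = some [true]) || decide (x.toFun [true] = some [false])

theorem epsilon_spec (x : PartialAut (n + 1)) (b c : Bool)
    (h : x.toFun [b] = some [c]) : xor b (epsilon x) = c := by
  unfold epsilon
  cases b <;> cases c <;> simp_all
  · intro hcontra
    have := x.inj _ _ _ h hcontra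
    simp at this
  · intro hcontra
    have := x.inj _ _ _ hcontra h
    simp at this

theorem epsilon_none (x : PartialAut (n + 1)) (hf : x.toFun [false] = none)
    (ht : x.toFun [true] = none) : epsilon x = false := by
  unfold epsilon
  simp [hf, ht]

/-- The optional restriction at child `b`. -/
noncomputable def res (x : PartialAut (n + 1)) (b : Bool) : Option (PartialAut n) :=
  if h : (x.toFun [b]).isSome then some (restrict x b h) else none

theorem res_eq_none (x : PartialAut (n + 1)) (b : Bool) :
    res x b = none ↔ x.toFun [b] = none := by
  unfold res
  split
  · next h => simp [Option.isSome_iff_ne_none.mp h]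
  · next h => simp [Option.not_isSome_iff_eq_none.mp (by exact h)]

/-- The structural equivalence giving the recursion `N_{n+1} + 1 = 2 (N_n + 1)²`. -/
noncomputable def structEquiv (n : ℕ) :
    Option (PartialAut (n + 1)) ≃ Bool × Option (PartialAut n) × Option (PartialAut n) where
  toFun o :=
    match o with
    | none => (true, none, none)
    | some x => (epsilon x, res x false, res x true)
  invFun p :=
    letI := Classical.dec (p.2.1 = none ∧ p.2.2 = none ∧ p.1 = true)
    if p.2.1 = none ∧ p.2.2 = none ∧ p.1 = true then none
    else some (glue p.1 (fun b => if b then p.2.2 else p.2.1))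
  left_inv := by
    intro o
    match o with
    | none => simp
    | some x =>
      have hcond : ¬ (res x false = none ∧ res x true = none ∧ epsilon x = true) := by
        rintro ⟨h0, h1, he⟩
        rw [res_eq_none] at h0 h1
        rw [epsilon_none x h0 h1] at he
        cases he
      simp only [hcond, if_neg, if_false]
      congr 1
      apply PartialAut.ext'
      funext l
      match l with
      | [] => rw [glue_nil, x.root_map]
      | b :: l' =>
        rw [glue_cons]
        have hresb : (if b then res x true else res x false) = res x b := by
          cases b <;> rfl
        rw [hresb]
        by_cases hb : (x.toFun [b]).isSome
        · obtain ⟨k, hk⟩ := Option.isSome_iff_exists.mp hb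
          obtain ⟨c, rfl⟩ := head_map x b hk
          have hc : xor b (epsilon x) = c := epsilon_spec x b c hk
          rw [show res x b = some (restrict x b hb) from dif_pos hb,
            Option.bind_some, restrict_toFun]
          cases hbl : x.toFun (b :: l') with
          | none => simp
          | some M =>
            obtain ⟨m1, rfl⟩ := head_eq x b c hk _ _ hbl
            simp [hc]
        · rw [(res_eq_none x b).mpr (Option.not_isSome_iff_eq_none.mp hb),
            Option.bind_none]
          cases hbl : x.toFun (b :: l') with
          | none => rfl
          | some M =>
            exact absurd (prefix_dom x b l' M hbl) hb
  right_inv := by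
    rintro ⟨ε, a₀, a₁⟩
    by_cases hcond : a₀ = none ∧ a₁ = none ∧ ε = true
    · obtain ⟨rfl, rfl, rfl⟩ := hcond
      simp
    · dsimp only
      rw [if_neg hcond]
      set a : Bool → Option (PartialAut n) := fun b => if b then a₁ else a₀ with ha
      have hhead : ∀ b, (glue ε a).toFun [b] = (a b).map (fun _ => [xor b ε]) := by
        intro b
        rw [show ([b] : List Bool) = b :: [] from rfl, glue_cons]
        cases hab : a b with
        | none => rfl
        | some y => rw [Option.bind_some, y.root_map]; rfl
      have hres : ∀ b, res (glue ε a) b = a b := by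
        intro b
        cases hab : a b with
        | none =>
          rw [res_eq_none, hhead, hab]; rfl
        | some y =>
          have hs : ((glue ε a).toFun [b]).isSome := by
            rw [hhead, hab]; rfl
          rw [show res (glue ε a) b = some (restrict (glue ε a) b hs) from dif_pos hs]
          congr 1
          apply PartialAut.ext'
          funext l
          rw [restrict_toFun, glue_cons, hab, Option.bind_some]
          cases hyl : y.toFun l with
          | none => rfl
          | some m => simp
      have heps : epsilon (glue ε a) = ε := by
        unfold epsilon
        cases ε
        · rw [hhead false, hhead true]
          cases a false <;> cases a true <;> simp
        · rw [hhead false, hhead true]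
          cases h0 : a false with
          | some y => simp
          | none =>
            cases h1 : a true with
            | some y => simp
            | none =>
              exfalso
              apply hcond
              refine ⟨?_, ?_, rfl⟩
              · simpa [ha] using h0
              · simpa [ha] using h1
      refine Prod.ext heps (Prod.ext ?_ ?_)
      · simpa [ha] using hres false
      · simpa [ha] using hres true

theorem subsingleton_zero : Subsingleton (PartialAut 0) := by
  constructor
  intro x y
  apply PartialAut.ext'
  funext l
  cases l with
  | nil => rw [x.root_map, y.root_map]
  | cons b l' =>
    have h : ¬ ((b :: l').length ≤ 0) := by simp
    rw [PartialAut.toFun_eq_none h, PartialAut.toFun_eq_none h]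

theorem card_option' (α : Type*) [Finite α] : Nat.card (Option α) = Nat.card α + 1 := by
  haveI := Fintype.ofFinite α
  simp [Nat.card_eq_fintype_card]

theorem card_succ (n : ℕ) : Nn (n + 1) + 1 = 2 * ((Nn n + 1) * (Nn n + 1)) := by
  have h := Nat.card_congr (structEquiv n)
  rw [card_option', Nat.card_prod, Nat.card_prod, card_option'] at h
  have hb : Nat.card Bool = 2 := by simp [Nat.card_eq_fintype_card]
  rw [hb] at h
  exact h

theorem key (n : ℕ) : Nn n + 1 = 2 ^ (2 ^ (n + 1) - 1) := by
  induction n with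
  | zero =>
    haveI := subsingleton_zero
    haveI : Nonempty (PartialAut 0) := ⟨1⟩
    show Nat.card (PartialAut 0) + 1 = _
    rw [Nat.card_unique]
    norm_num
  | succ k ih =>
    rw [card_succ, ih]
    have h1 : (1 : ℕ) ≤ 2 ^ (k + 1) := Nat.one_le_two_pow
    have h2 : (2 : ℕ) ^ (k + 2) = 2 * 2 ^ (k + 1) := by ring
    have h3 : 2 * (2 ^ (2 ^ (k + 1) - 1) * 2 ^ (2 ^ (k + 1) - 1))
        = 2 ^ ((2 ^ (k + 1) - 1) + (2 ^ (k + 1) - 1) + 1) := by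
      rw [← pow_add, pow_succ]
      ring
    rw [h3]
    congr 1
    omega

end CardProof


/-- `N_n = 2^{2^{n+1}-1} - 1` for every `n ≥ 1`. -/
theorem card_partialAut (n : ℕ) (hn : 1 ≤ n) :
    Nn n = 2 ^ (2 ^ (n + 1) - 1) - 1 := by
  have h := CardProof.key n
  omega
end

section
/- For every partial automorphism x of the n-level binary rooted tree, the number of non-zero roots (counted with multiplicity) of the characteristic polynomial of the action matrix A_x equals the ultimate rank rk_n(x) of x. -/
open scoped BigOperators

namespace UrkAux

open Polynomial

variable {α : Type*}

/-- Iterate a partial map `m` times. -/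
def iter (f : α → Option α) : ℕ → α → Option α
  | 0, a => some a
  | m + 1, a => (iter f m a).bind f

@[simp] lemma iter_zero (f : α → Option α) (a : α) : iter f 0 a = some a := rfl

lemma iter_succ (f : α → Option α) (m : ℕ) (a : α) :
    iter f (m + 1) a = (iter f m a).bind f := rfl

lemma iter_add (f : α → Option α) (p q : ℕ) (a : α) :
    iter f (p + q) a = (iter f p a).bind (iter f q) := by
  induction q with
  | zero => simp only [Nat.add_zero]; cases iter f p a <;> rfl
  | succ q ih =>
      rw [← Nat.add_assoc, iter_succ, ih, Option.bind_assoc]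
      rfl

lemma iter_succ' (f : α → Option α) (m : ℕ) (a : α) :
    iter f (m + 1) a = (f a).bind (iter f m) := by
  have h := iter_add f 1 m a
  rw [Nat.add_comm 1 m] at h
  simpa [iter] using h

/-- The set of points surviving all iterates. -/
def Surv (f : α → Option α) (a : α) : Prop := ∀ m, iter f m a ≠ none

lemma surv_of_mem {f : α → Option α} {a b : α} (hb : f a = some b) (h : Surv f b) :
    Surv f a := by
  intro m
  cases m with
  | zero => simp
  | succ m => rw [iter_succ', hb, Option.bind_some]; exact h m

lemma surv_next {f : α → Option α} {a b : α} (ha : Surv f a) (hb : f a = some b) :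
    Surv f b := by
  intro m hm
  exact ha (m + 1) (by rw [iter_succ', hb, Option.bind_some]; exact hm)

lemma surv_exists {f : α → Option α} {a : α} (ha : Surv f a) : ∃ b, f a = some b := by
  cases h : f a with
  | none => exact absurd (by simp [iter, h] : iter f 1 a = none) (ha 1)
  | some b => exact ⟨b, rfl⟩

lemma iter_card_eq_none [Fintype α] {f : α → Option α} {a : α} (ha : ¬ Surv f a) :
    iter f (Fintype.card α) a = none := by
  by_contra h
  set N := Fintype.card α with hN
  have hdef : ∀ i : Fin (N + 1), iter f i.1 a ≠ none := by
    intro i hnone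
    apply h
    obtain ⟨d, hd⟩ := Nat.exists_eq_add_of_le (Nat.lt_succ_iff.mp i.2)
    rw [hd, iter_add, hnone, Option.bind_none]
  have hb : ∀ i : Fin (N + 1), ∃ c, iter f i.1 a = some c := by
    intro i
    cases hc : iter f i.1 a with
    | none => exact absurd hc (hdef i)
    | some c => exact ⟨c, rfl⟩
  choose b hbs using hb
  have hninj : ¬ Function.Injective b := by
    intro hinj
    have := Fintype.card_le_of_injective b hinj
    simp [hN] at this
  rw [Function.not_injective_iff] at hninj
  obtain ⟨i, j, hij, hne⟩ := hninj
  -- wlog i < j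
  have key : ∀ (i j : Fin (N + 1)), i.1 < j.1 → b i = b j → Surv f a := by
    intro i j hlt hbij
    set c := b i with hc
    have h1 : iter f i.1 a = some c := hbs i
    have h2 : iter f j.1 a = some c := by rw [hbs j, ← hbij]
    set d := j.1 - i.1 with hd
    have hd1 : 1 ≤ d := by omega
    have hcyc : iter f d c = some c := by
      have := iter_add f i.1 d a
      rw [h1, Option.bind_some] at this
      rw [← this]
      have : i.1 + d = j.1 := by omega
      rw [this, h2]
    have hkd : ∀ k, iter f (k * d) c = some c := by
      intro k
      induction k with
      | zero => simp
      | succ k ih =>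
          have : (k + 1) * d = k * d + d := by ring
          rw [this, iter_add, ih, Option.bind_some, hcyc]
    intro m hm
    have hle : m ≤ i.1 + m * d := by
      have : m ≤ m * d := Nat.le_mul_of_pos_right m (by omega)
      omega
    have hbig : iter f (i.1 + m * d) a = some c := by
      rw [iter_add, h1, Option.bind_some, hkd]
    obtain ⟨e, he⟩ := Nat.exists_eq_add_of_le hle
    rw [he, iter_add, hm, Option.bind_none] at hbig
    exact absurd hbig (by simp)
  rcases Nat.lt_or_ge i.1 j.1 with hlt | hge
  · exact ha (key i j hlt hij)
  · have hlt : j.1 < i.1 := by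
      rcases Nat.lt_or_ge j.1 i.1 with h' | h'
      · exact h'
      · exact absurd (Fin.ext (by omega)) hne
    exact ha (key j i hlt hij.symm)

/-- The 0/1 matrix of a partial map. -/
noncomputable def pmat [Fintype α] [DecidableEq α] (f : α → Option α) : Matrix α α ℂ :=
  Matrix.of fun i j => if f i = some j then 1 else 0

lemma pmat_pow [Fintype α] [DecidableEq α] (f : α → Option α) (m : ℕ) :
    (pmat f) ^ m = pmat (iter f m) := by
  induction m with
  | zero =>
      ext i j
      simp [pmat, Matrix.one_apply]
  | succ m ih =>
      rw [pow_succ, ih]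
      ext i j
      rw [Matrix.mul_apply]
      cases hc : iter f m i with
      | none =>
          simp [pmat, hc, iter_succ]
      | some c =>
          have hr : iter f (m + 1) i = f c := by rw [iter_succ, hc, Option.bind_some]
          simp only [pmat, Matrix.of_apply, hr, hc]
          rw [Finset.sum_eq_single c]
          · simp
          · intro k _ hk
            simp [Ne.symm hk]
          · intro h; exact absurd (Finset.mem_univ c) h

/-- Restriction of a partial map to a forward-closed set. -/
noncomputable def restrict (f : α → Option α) (P : α → Prop)
    (hP : ∀ ⦃a b : α⦄, P a → f a = some b → P b) : {a // P a} → Option {a // P a} :=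
  fun a => (f a.1).pmap (fun b hb => ⟨b, hP a.2 hb⟩) (fun _ hb => hb)

lemma map_val_pmap {β γ : Type*} {p : β → Prop} (g : ∀ b, p b → γ) (v : γ → β)
    (o : Option β) (H : ∀ b ∈ o, p b) (hv : ∀ b h, v (g b h) = b) :
    Option.map v (o.pmap g H) = o := by
  cases o <;> simp [Option.pmap, hv]

lemma restrict_map (f : α → Option α) (P : α → Prop)
    (hP : ∀ ⦃a b : α⦄, P a → f a = some b → P b) (a : {a // P a}) :
    Option.map Subtype.val (restrict f P hP a) = f a.1 :=
  map_val_pmap _ _ _ _ (fun _ _ => rfl)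

lemma map_val_eq_some_iff {β : Type*} {P : β → Prop} {o : Option {b // P b}} {b : {b // P b}} :
    o = some b ↔ Option.map Subtype.val o = some b.1 := by
  cases o with
  | none => simp
  | some c => simp [Subtype.ext_iff]

lemma restrict_eq_some_iff (f : α → Option α) (P : α → Prop)
    (hP : ∀ ⦃a b : α⦄, P a → f a = some b → P b) (a b : {a // P a}) :
    restrict f P hP a = some b ↔ f a.1 = some b.1 := by
  rw [map_val_eq_some_iff, restrict_map]

lemma iter_restrict (f : α → Option α) (P : α → Prop)
    (hP : ∀ ⦃a b : α⦄, P a → f a = some b → P b) (m : ℕ) (a : {a // P a}) :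
    Option.map Subtype.val (iter (restrict f P hP) m a) = iter f m a.1 := by
  induction m with
  | zero => rfl
  | succ m ih =>
      rw [iter_succ, iter_succ, ← ih]
      cases hc : iter (restrict f P hP) m a with
      | none => simp
      | some c =>
          simp only [Option.bind_some, Option.map_some, restrict_map]

theorem pmat_count [Fintype α] [DecidableEq α] (f : α → Option α)
    (hinj : ∀ a b c, f a = some c → f b = some c → a = b) :
    Multiset.card (((pmat f).charpoly.roots).filter (fun z => z ≠ 0)) =
      Nat.card {a // Surv f a} := by
  classical
  have hPc : ∀ ⦃a b : α⦄, Surv f a → f a = some b → Surv f b := fun a b ha hb => surv_next ha hb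
  have hNc : ∀ ⦃a b : α⦄, ¬ Surv f a → f a = some b → ¬ Surv f b :=
    fun a b ha hb hSb => ha (surv_of_mem hb hSb)
  set fS := restrict f (Surv f) hPc with hfS
  set fN := restrict f (fun a => ¬ Surv f a) hNc with hfN
  set B := pmat fS with hB
  set C := pmat fN with hC
  let e : {a // Surv f a} ⊕ {a // ¬ Surv f a} ≃ α := Equiv.sumCompl _
  have hA : Matrix.reindex e.symm e.symm (pmat f) = Matrix.fromBlocks B 0 0 C := by
    ext i j
    cases i with
    | inl i =>
        cases j with
        | inl j =>
            show pmat f i.1 j.1 = B i j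
            simp only [pmat, hB, hfS, Matrix.of_apply, restrict_eq_some_iff]
        | inr j =>
            show pmat f i.1 j.1 = (0 : Matrix _ _ ℂ) i j
            have : f i.1 ≠ some j.1 := fun h => j.2 (hPc i.2 h)
            simp [pmat, this]
    | inr i =>
        cases j with
        | inl j =>
            show pmat f i.1 j.1 = (0 : Matrix _ _ ℂ) i j
            have : f i.1 ≠ some j.1 := fun h => (hNc i.2 h) j.2
            simp [pmat, this]
        | inr j =>
            show pmat f i.1 j.1 = C i j
            simp only [pmat, hC, hfN, Matrix.of_apply, restrict_eq_some_iff]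
  have hsplit : (pmat f).charpoly = B.charpoly * C.charpoly := by
    rw [← Matrix.charpoly_reindex e.symm, hA, Matrix.charpoly_fromBlocks_zero₁₂]
  -- C is nilpotent
  have hCnil : IsNilpotent C := by
    refine ⟨Fintype.card α, ?_⟩
    rw [hC, pmat_pow]
    ext i j
    have : iter fN (Fintype.card α) i = none := by
      have h1 := iter_restrict f (fun a => ¬ Surv f a) hNc (Fintype.card α) i
      rw [iter_card_eq_none i.2] at h1
      exact Option.map_eq_none_iff.mp h1
    simp [pmat, this]
  have hCpoly : C.charpoly = X ^ (Fintype.card {a // ¬ Surv f a}) := by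
    have h1 := Matrix.isNilpotent_charpoly_sub_pow_of_isNilpotent hCnil
    have h2 := h1.eq_zero
    exact sub_eq_zero.mp h2
  -- B is a permutation matrix
  have hgs : ∀ a : {a // Surv f a}, ∃ b : {a // Surv f a}, fS a = some b := by
    intro a
    obtain ⟨b, hb⟩ := surv_exists a.2
    exact ⟨⟨b, hPc a.2 hb⟩, (restrict_eq_some_iff _ _ _ _ _).mpr hb⟩
  choose g hg using hgs
  have hginj : Function.Injective g := by
    intro a b hab
    have ha : f a.1 = some (g a).1 := (restrict_eq_some_iff _ _ _ _ _).mp (hg a)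
    have hb : f b.1 = some (g b).1 := (restrict_eq_some_iff _ _ _ _ _).mp (hg b)
    rw [hab] at ha
    exact Subtype.ext (hinj a.1 b.1 (g b).1 ha hb)
  have hgbij := Finite.injective_iff_bijective.mp hginj
  let σ : Equiv.Perm {a // Surv f a} := Equiv.ofBijective g hgbij
  have hBperm : B = σ.permMatrix ℂ := by
    ext i j
    have hσ : σ i = g i := rfl
    rw [Equiv.Perm.permMatrix, PEquiv.toMatrix_toPEquiv_eq, Matrix.submatrix_apply, hσ]
    show (if fS i = some j then (1 : ℂ) else 0) = _
    rw [hg i]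
    by_cases h : g i = j
    · simp [h, Matrix.one_apply]
    · simp [h, Matrix.one_apply]
  have hdet : B.det ≠ 0 := by
    rw [hBperm, Matrix.det_permutation]
    simp
  have h0notroot : (0 : ℂ) ∉ B.charpoly.roots := by
    intro h
    have hroot := Polynomial.isRoot_of_mem_roots h
    rw [Polynomial.IsRoot, ← Polynomial.coeff_zero_eq_eval_zero] at hroot
    apply hdet
    rw [Matrix.det_eq_sign_charpoly_coeff, hroot, mul_zero]
  have hBne : B.charpoly ≠ 0 := (Matrix.charpoly_monic B).ne_zero
  have hCne : C.charpoly ≠ 0 := (Matrix.charpoly_monic C).ne_zero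
  have hcardB : Multiset.card B.charpoly.roots = Fintype.card {a // Surv f a} := by
    rw [Polynomial.splits_iff_card_roots.mp (IsAlgClosed.splits _),
      Matrix.charpoly_natDegree_eq_dim]
  rw [hsplit, Polynomial.roots_mul (mul_ne_zero hBne hCne), Multiset.filter_add,
    Multiset.card_add, hCpoly, Polynomial.roots_pow, Polynomial.roots_X]
  have hfiltB : B.charpoly.roots.filter (fun z => z ≠ 0) = B.charpoly.roots :=
    Multiset.filter_eq_self.mpr (fun z hz h0 => h0notroot (h0 ▸ hz))
  have hfiltC : (((Fintype.card {a // ¬ Surv f a}) • ({0} : Multiset ℂ)).filter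
      (fun z => z ≠ 0)) = 0 := by
    rw [Multiset.filter_eq_nil]
    intro z hz
    have : z = 0 := by
      have := Multiset.mem_of_mem_nsmul hz
      simpa using this
    simp [this]
  rw [hfiltB, hfiltC, hcardB, Nat.card_eq_fintype_card]
  simp

end UrkAux

/-- the number of non-zero roots (with multiplicity) of the characteristic
polynomial of the action matrix `A_x` equals the ultimate rank `rk_n(x)`. -/
theorem nonzero_eigenvalues_card_eq_urk (n : ℕ) (x : PartialAut n) :
    Multiset.card ((eigenvalues x).filter (fun z => z ≠ 0)) = urk x := by
  classical
  open UrkAux in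
  -- the induced partial map on leaves
  set F : Leaf n → Option (Leaf n) := fun a =>
    (x.toFun a.1).pmap (fun b hb => (⟨b, hb⟩ : Leaf n))
      (fun b hb => (x.length_map a.1 b hb).trans a.2) with hFdef
  have hF : ∀ a : Leaf n, Option.map Subtype.val (F a) = x.toFun a.1 := by
    intro a
    rw [hFdef]
    exact UrkAux.map_val_pmap _ _ _ _ (fun _ _ => rfl)
  have hFsome : ∀ (a b : Leaf n), F a = some b ↔ x.toFun a.1 = some b.1 := by
    intro a b
    exact UrkAux.map_val_eq_some_iff.trans (by rw [hF])
  have hAF : actionMatrix x = pmat F := by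
    ext i j
    show (if x.toFun i.1 = some j.1 then (1:ℂ) else 0) = (if F i = some j then 1 else 0)
    simp only [hFsome]
  have hFinj : ∀ a b c : Leaf n, F a = some c → F b = some c → a = b := by
    intro a b c ha hb
    rw [hFsome] at ha hb
    exact Subtype.ext (x.inj a.1 b.1 c.1 ha hb)
  have hiter : ∀ (m : ℕ) (a : Leaf n),
      Option.map Subtype.val (iter (α := Leaf n) F m a) = (x ^ m).toFun a.1 := by
    intro m
    induction m with
    | zero =>
        intro a
        simp [pow_zero, a.2]
        rfl
    | succ m ih =>
        intro a
        rw [pow_succ, PartialAut.mul_toFun, ← ih a, iter_succ]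
        cases hc : iter F m a with
        | none => simp; rfl
        | some c => simp [hF]; rfl
  -- survivors
  have hsurv : ∀ a : Leaf n, Surv F a ↔ a.1 ∈ survSet x := by
    intro a
    constructor
    · intro h
      refine ⟨a.2, fun m hm hnone => ?_⟩
      apply h m
      have := hiter m a
      rw [hnone] at this
      exact Option.map_eq_none_iff.mp this
    · rintro ⟨_, hdom⟩ m hnone
      cases m with
      | zero => exact absurd hnone (by simp)
      | succ m =>
          apply hdom (m+1) (Nat.succ_le_succ (Nat.zero_le m))
          show (x ^ (m+1)).toFun a.1 = none
          rw [← hiter, hnone]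
          rfl
  have hcard : Nat.card {a : Leaf n // Surv F a} = urk x := by
    rw [urk]
    apply Nat.card_congr
    exact
      { toFun := fun a => ⟨a.1.1, (hsurv a.1).mp a.2⟩
        invFun := fun l => ⟨⟨l.1, l.2.1⟩, (hsurv ⟨l.1, l.2.1⟩).mpr l.2⟩
        left_inv := fun a => by ext; rfl
        right_inv := fun l => by ext; rfl }
  rw [eigenvalues, hAF, pmat_count F hFinj, hcard]
end

section
/- The total rank R'_n of the semigroup P_n of partial automorphisms of the n-level binary rooted tree satisfies the recursion R'_n = 4 R'_{n-1} + 4 R'_{n-1} N_{n-1} for all n ≥ 2, where N_{n-1} = |P_{n-1}|. -/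
open scoped BigOperators

namespace RecAux

open PartialAut

/-- Structure lemma: if `b :: t` is in the domain, then `[b]` is, and the image
starts with the image of `[b]`. -/
theorem cons_head {n : ℕ} (x : PartialAut (n+1)) :
    ∀ (t : List Bool) (b : Bool) (L : List Bool), x.toFun (b :: t) = some L →
      ∃ d m, x.toFun [b] = some [d] ∧ L = d :: m := by
  intro t
  induction t using List.reverseRecOn with
  | nil =>
      intro b L h
      have hl : L.length = 1 := x.length_map _ _ h
      obtain ⟨d, rfl⟩ := List.length_eq_one_iff.mp hl
      exact ⟨d, [], h, rfl⟩
  | append_singleton t c ih =>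
      intro b L h
      rw [← List.cons_append] at h
      obtain ⟨u, c', hu, rfl⟩ := x.child_map _ _ _ h
      obtain ⟨d, m, hd, rfl⟩ := ih b u hu
      exact ⟨d, m ++ [c'], hd, by simp⟩

theorem none_cons {n : ℕ} (x : PartialAut (n+1)) {b : Bool}
    (hb : x.toFun [b] = none) (t : List Bool) : x.toFun (b :: t) = none := by
  cases hx : x.toFun (b :: t) with
  | none => rfl
  | some L =>
      obtain ⟨d, m, hd, _⟩ := cons_head x t b L hx
      rw [hb] at hd; cases hd

/-- The restriction of `x` below the child `b` of the root. -/
def slice {n : ℕ} (x : PartialAut (n+1)) (b d : Bool)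
    (hd : x.toFun [b] = some [d]) : PartialAut n where
  toFun t := (x.toFun (b :: t)).map List.tail
  length_le := by
    intro l m h
    try dsimp only at h
    cases hx : x.toFun (b :: l) with
    | none => rw [hx] at h; cases h
    | some L =>
        have := x.length_le _ _ hx
        simpa using this
  root_map := by simp [hd]
  child_map := by
    intro l c m h
    try dsimp only at h ⊢
    rw [← List.cons_append] at h
    cases hx : x.toFun ((b :: l) ++ [c]) with
    | none => rw [hx] at h; cases h
    | some L =>
        rw [hx] at h
        obtain ⟨u, c', hu, rfl⟩ := x.child_map _ _ _ hx
        obtain ⟨d', m', hd', rfl⟩ := cons_head x l b u hu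
        simp only [Option.map_some] at h
        refine ⟨m', c', ?_, ?_⟩
        · rw [hu]; rfl
        · simpa using h.symm
  inj := by
    intro l l' m h h'
    try dsimp only at h h'
    cases hx : x.toFun (b :: l) with
    | none => rw [hx] at h; cases h
    | some L =>
      cases hx' : x.toFun (b :: l') with
      | none => rw [hx'] at h'; cases h'
      | some L' =>
        rw [hx] at h; rw [hx'] at h'
        obtain ⟨e, m1, he, rfl⟩ := cons_head x l b L hx
        obtain ⟨e', m1', he', rfl⟩ := cons_head x l' b L' hx'
        rw [hd] at he he'
        obtain rfl : d = e := by simpa using he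
        obtain rfl : d = e' := by simpa using he'
        simp only [Option.map_some, List.tail_cons] at h h'
        obtain rfl : m1 = m := by simpa using h
        obtain rfl : m1' = m1 := by simpa using h'
        exact List.cons_injective (x.inj _ _ _ hx hx')

@[simp] theorem slice_toFun {n : ℕ} (x : PartialAut (n+1)) (b d : Bool)
    (hd : x.toFun [b] = some [d]) (t : List Bool) :
    (slice x b d hd).toFun t = (x.toFun (b :: t)).map List.tail := rfl

/-- The gluing of a partial injection on the root's children with slices. -/
def glueFun {k : ℕ} (σ : Bool → Option Bool) (g : Bool → PartialAut k) :
    List Bool → Option (List Bool)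
  | [] => some []
  | b :: t => (σ b).bind fun d => ((g b).toFun t).map fun m => d :: m

def glue {k : ℕ} (σ : Bool → Option Bool)
    (hσ : ∀ b b' d, σ b = some d → σ b' = some d → b = b')
    (g : Bool → PartialAut k) : PartialAut (k+1) where
  toFun := glueFun σ g
  length_le := by
    intro l m h
    cases l with
    | nil => simp
    | cons b t =>
        simp only [glueFun] at h
        cases hσb : σ b with
        | none => rw [hσb] at h; cases h
        | some d =>
            rw [hσb, Option.bind_some] at h
            cases hg : (g b).toFun t with
            | none => rw [hg] at h; cases h
            | some m' =>
                have := (g b).length_le t m' hg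
                simp only [List.length_cons]
                omega
  root_map := rfl
  child_map := by
    intro l b m h
    cases l with
    | nil =>
        simp only [List.nil_append, glueFun] at h
        rw [(g b).root_map] at h
        cases hσb : σ b with
        | none => rw [hσb] at h; cases h
        | some d =>
            rw [hσb, Option.bind_some, Option.map_some] at h
            cases h
            exact ⟨[], d, rfl, rfl⟩
    | cons c t =>
        rw [List.cons_append] at h
        simp only [glueFun] at h
        cases hσc : σ c with
        | none => rw [hσc] at h; cases h
        | some d =>
            rw [hσc, Option.bind_some] at h
            cases hg : (g c).toFun (t ++ [b]) with
            | none => rw [hg] at h; cases h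
            | some m' =>
                rw [hg, Option.map_some] at h
                cases h
                obtain ⟨u, b', hu, rfl⟩ := (g c).child_map _ _ _ hg
                refine ⟨d :: u, b', ?_, by simp⟩
                show glueFun σ g (c :: t) = some (d :: u)
                simp only [glueFun]
                rw [hσc, Option.bind_some, hu, Option.map_some]
  inj := by
    intro l l' m h h'
    cases l with
    | nil =>
        have hm : m = [] := by simpa [glueFun] using h.symm
        subst hm
        cases l' with
        | nil => rfl
        | cons c t =>
            simp only [glueFun] at h'
            cases hσc : σ c with
            | none => rw [hσc] at h'; cases h'
            | some d =>
                rw [hσc, Option.bind_some] at h'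
                cases hg : (g c).toFun t with
                | none => rw [hg] at h'; cases h'
                | some m' => rw [hg, Option.map_some] at h'; cases h'
    | cons b t =>
        simp only [glueFun] at h
        cases hσb : σ b with
        | none => rw [hσb] at h; cases h
        | some d =>
            rw [hσb, Option.bind_some] at h
            cases hg : (g b).toFun t with
            | none => rw [hg] at h; cases h
            | some m1 =>
                rw [hg, Option.map_some] at h
                cases l' with
                | nil =>
                    have hm : m = [] := by simpa [glueFun] using h'.symm
                    rw [hm] at h
                    cases Option.some.inj h
                | cons b' t' =>
                    simp only [glueFun] at h'
                    cases hσb' : σ b' with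
                    | none => rw [hσb'] at h'; cases h'
                    | some d' =>
                        rw [hσb', Option.bind_some] at h'
                        cases hg' : (g b').toFun t' with
                        | none => rw [hg'] at h'; cases h'
                        | some m1' =>
                            rw [hg', Option.map_some] at h'
                            rw [← h] at h'
                            have h2 := Option.some.inj h'
                            have hd2 : d' = d := (List.cons.injEq _ _ _ _ ▸ h2).1
                            have hm2 : m1' = m1 := (List.cons.injEq _ _ _ _ ▸ h2).2
                            rw [hd2] at hσb'
                            rw [hm2] at hg'
                            obtain rfl : b = b' := hσ b b' d hσb hσb'
                            rw [(g b).inj t t' m1 hg hg']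

theorem glue_toFun_cons {k : ℕ} (σ : Bool → Option Bool)
    (hσ : ∀ b b' d, σ b = some d → σ b' = some d → b = b')
    (g : Bool → PartialAut k) (b : Bool) (t : List Bool) :
    (glue σ hσ g).toFun (b :: t)
      = (σ b).bind fun d => ((g b).toFun t).map fun m => d :: m := rfl

theorem glue_toFun_single {k : ℕ} (σ : Bool → Option Bool)
    (hσ : ∀ b b' d, σ b = some d → σ b' = some d → b = b')
    (g : Bool → PartialAut k) (b : Bool) :
    (glue σ hσ g).toFun [b] = (σ b).map fun d => [d] := by
  rw [show ([b] : List Bool) = b :: [] from rfl, glue_toFun_cons, (g b).root_map]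
  cases σ b <;> rfl

/-- `lrank` of a glued automorphism. -/
theorem lrank_glue {k : ℕ} (σ : Bool → Option Bool)
    (hσ : ∀ b b' d, σ b = some d → σ b' = some d → b = b')
    (g : Bool → PartialAut k) :
    lrank (glue σ hσ g)
      = (if σ false = none then 0 else lrank (g false))
        + (if σ true = none then 0 else lrank (g true)) := by
  classical
  set A : Bool → Set (List Bool) :=
    fun b => {t | σ b ≠ none ∧ (g b).toFun t ≠ none ∧ t.length = k} with hA
  have hAfin : ∀ b, (A b).Finite := fun b =>
    Set.Finite.subset (List.finite_length_eq Bool k) (fun t ht => ht.2.2)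
  have hset : {l : List Bool | l ∈ (glue σ hσ g).dom ∧ l.length = k + 1}
      = ((false :: ·) '' A false) ∪ ((true :: ·) '' A true) := by
    ext l
    constructor
    · rintro ⟨hdom, hlen⟩
      cases l with
      | nil => simp at hlen
      | cons b t =>
          have hdom' : glueFun σ g (b :: t) ≠ none := hdom
          simp only [glueFun] at hdom'
          have hσb : σ b ≠ none := by
            intro hb; rw [hb] at hdom'; exact hdom' rfl
          obtain ⟨d, hd⟩ := Option.ne_none_iff_exists'.mp hσb
          rw [hd, Option.bind_some] at hdom'
          have hgb : (g b).toFun t ≠ none := by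
            intro hb; rw [hb] at hdom'; exact hdom' rfl
          have hlt : t.length = k := by
            simp only [List.length_cons] at hlen; omega
          cases b with
          | false => exact Or.inl ⟨t, ⟨hσb, hgb, hlt⟩, rfl⟩
          | true => exact Or.inr ⟨t, ⟨hσb, hgb, hlt⟩, rfl⟩
    · rintro (⟨t, ⟨hσb, hgb, hlt⟩, rfl⟩ | ⟨t, ⟨hσb, hgb, hlt⟩, rfl⟩) <;>
        obtain ⟨d, hd⟩ := Option.ne_none_iff_exists'.mp hσb <;>
        obtain ⟨m, hm⟩ := Option.ne_none_iff_exists'.mp hgb <;>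
        refine ⟨?_, by simp [hlt]⟩
      · show glueFun σ g (false :: t) ≠ none
        simp only [glueFun]
        rw [hd, Option.bind_some, hm, Option.map_some]
        exact fun h => by cases h
      · show glueFun σ g (true :: t) ≠ none
        simp only [glueFun]
        rw [hd, Option.bind_some, hm, Option.map_some]
        exact fun h => by cases h
  have hdisj : Disjoint ((false :: ·) '' A false) ((true :: ·) '' A true) := by
    rw [Set.disjoint_left]
    rintro l ⟨t, _, rfl⟩ ⟨t', _, hl⟩
    cases hl
  have hcardA : ∀ b, (A b).ncard = if σ b = none then 0 else lrank (g b) := by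
    intro b
    by_cases hb : σ b = none
    · have : A b = ∅ := by
        ext t; simp [hA, hb]
      rw [this, if_pos hb]
      simp
    · rw [if_neg hb]
      have : A b = {t : List Bool | t ∈ (g b).dom ∧ t.length = k} := by
        ext t
        simp only [hA, Set.mem_setOf_eq, PartialAut.dom, ne_eq]
        tauto
      rw [this, lrank, Nat.card_coe_set_eq]
  rw [lrank, Nat.card_coe_set_eq, hset,
    Set.ncard_union_eq hdisj ((hAfin false).image _) ((hAfin true).image _),
    Set.ncard_image_of_injective _ (List.cons_injective),
    Set.ncard_image_of_injective _ (List.cons_injective),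
    hcardA, hcardA]

/-- The index type for the decomposition of `PartialAut (k+1)`. -/
abbrev Ety (k : ℕ) :=
  Option (((Bool × Bool) × PartialAut k) ⊕ (Bool × PartialAut k × PartialAut k))

theorem sig2_inj : ∀ s c c' e : Bool,
    some (xor s c) = some e → some (xor s c') = some e → c = c' := by
  decide

/-- The decomposition map. -/
noncomputable def Phi {k : ℕ} : Ety k → PartialAut (k+1)
  | none => glue (fun _ => none) (fun b b' d h _ => by cases h) (fun _ => 1)
  | some (Sum.inl ((b, d), y)) =>
      glue (fun c => if c = b then some d else none)
        (by
          intro c c' e h h'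
          by_cases h1 : c = b
          · by_cases h2 : c' = b
            · rw [h1, h2]
            · simp [h2] at h'
          · simp [h1] at h) (fun _ => y)
  | some (Sum.inr (s, y0, y1)) =>
      glue (fun c => some (xor s c)) (sig2_inj s) (fun c => if c then y1 else y0)

theorem lrank_Phi_none {k : ℕ} : lrank (Phi (k := k) none) = 0 := by
  simp only [Phi]; rw [lrank_glue]; simp

theorem lrank_Phi_inl {k : ℕ} (b d : Bool) (y : PartialAut k) :
    lrank (Phi (some (Sum.inl ((b, d), y)))) = lrank y := by
  simp only [Phi]; rw [lrank_glue]; cases b <;> simp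

theorem lrank_Phi_inr {k : ℕ} (s : Bool) (y0 y1 : PartialAut k) :
    lrank (Phi (some (Sum.inr (s, y0, y1)))) = lrank y0 + lrank y1 := by
  simp only [Phi]; rw [lrank_glue]; simp

theorem glue_slice_eq {n : ℕ} (x : PartialAut (n+1)) (b d : Bool)
    (hd : x.toFun [b] = some [d]) (t : List Bool) :
    ((slice x b d hd).toFun t).map (fun m => d :: m) = x.toFun (b :: t) := by
  rw [slice_toFun]
  cases hx : x.toFun (b :: t) with
  | none => rfl
  | some L =>
      obtain ⟨e, m, he, rfl⟩ := cons_head x t b L hx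
      rw [hd] at he
      obtain rfl : d = e := by simpa using he
      simp

theorem single_form {n : ℕ} (x : PartialAut (n+1)) {b : Bool} {L : List Bool}
    (h : x.toFun [b] = some L) : ∃ d, x.toFun [b] = some [d] := by
  obtain ⟨d, m, hd, _⟩ := cons_head x [] b L h
  exact ⟨d, hd⟩

theorem Phi_injective (k : ℕ) : Function.Injective (Phi (k := k)) := by
  intro e e' h
  have ht : ∀ l, (Phi e).toFun l = (Phi e').toFun l := fun l => by rw [h]
  match e, e' with
  | none, none => rfl
  | none, some (Sum.inl ((b', d'), y')) =>
      have := ht [b']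
      simp [Phi, glue_toFun_single] at this
  | none, some (Sum.inr (s', y0', y1')) =>
      have := ht [false]
      simp [Phi, glue_toFun_single] at this
  | some (Sum.inl ((b, d), y)), none =>
      have := ht [b]
      simp [Phi, glue_toFun_single] at this
  | some (Sum.inr (s, y0, y1)), none =>
      have := ht [false]
      simp [Phi, glue_toFun_single] at this
  | some (Sum.inl ((b, d), y)), some (Sum.inr (s', y0', y1')) =>
      have := ht [!b]
      simp [Phi, glue_toFun_single] at this
  | some (Sum.inr (s, y0, y1)), some (Sum.inl ((b', d'), y')) =>
      have := ht [!b']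
      simp [Phi, glue_toFun_single] at this
  | some (Sum.inl ((b, d), y)), some (Sum.inl ((b', d'), y')) =>
      obtain rfl : b = b' := by
        by_contra hbb
        have := ht [b]
        simp [Phi, glue_toFun_single, hbb] at this
      obtain rfl : d = d' := by
        have := ht [b]
        simpa [Phi, glue_toFun_single] using this
      obtain rfl : y = y' := by
        apply ext'
        funext t
        have := ht (b :: t)
        simp only [Phi, glue_toFun_cons, if_pos rfl, Option.bind_some] at this
        exact Option.map_injective List.cons_injective this
      rfl
  | some (Sum.inr (s, y0, y1)), some (Sum.inr (s', y0', y1')) =>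
      obtain rfl : s = s' := by
        have := ht [false]
        simpa [Phi, glue_toFun_single] using this
      obtain rfl : y0 = y0' := by
        apply ext'
        funext t
        have := ht (false :: t)
        simp only [Phi, glue_toFun_cons, Option.bind_some, if_neg Bool.false_ne_true,
          Bool.cond_false] at this
        exact Option.map_injective List.cons_injective this
      obtain rfl : y1 = y1' := by
        apply ext'
        funext t
        have := ht (true :: t)
        simp only [Phi, glue_toFun_cons, Option.bind_some] at this
        exact Option.map_injective List.cons_injective this
      rfl

theorem Phi_surjective (k : ℕ) : Function.Surjective (Phi (k := k)) := by
  intro x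
  cases hxf : x.toFun [false] with
  | none =>
      cases hxt : x.toFun [true] with
      | none =>
          refine ⟨none, ext' (funext fun l => ?_)⟩
          cases l with
          | nil => rw [(Phi none).root_map, x.root_map]
          | cons b t =>
              have hx : x.toFun (b :: t) = none :=
                none_cons x (by cases b; exact hxf; exact hxt) t
              rw [hx]; rfl
      | some L =>
          obtain ⟨d, hd⟩ := single_form x hxt
          refine ⟨some (Sum.inl ((true, d), slice x true d hd)),
            ext' (funext fun l => ?_)⟩
          cases l with
          | nil => rw [(Phi _).root_map, x.root_map]
          | cons b t =>
              cases b with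
              | false =>
                  have hx : x.toFun (false :: t) = none := none_cons x hxf t
                  rw [hx]
                  simp [Phi, glue_toFun_cons]
              | true =>
                  simp only [Phi, glue_toFun_cons, if_pos rfl, Option.bind_some]
                  exact glue_slice_eq x true d hd t
  | some L =>
      obtain ⟨d0, hd0⟩ := single_form x hxf
      cases hxt : x.toFun [true] with
      | none =>
          refine ⟨some (Sum.inl ((false, d0), slice x false d0 hd0)),
            ext' (funext fun l => ?_)⟩
          cases l with
          | nil => rw [(Phi _).root_map, x.root_map]
          | cons b t =>
              cases b with
              | true =>
                  have hx : x.toFun (true :: t) = none := none_cons x hxt t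
                  rw [hx]
                  simp [Phi, glue_toFun_cons]
              | false =>
                  simp only [Phi, glue_toFun_cons, if_pos rfl, Option.bind_some]
                  exact glue_slice_eq x false d0 hd0 t
      | some L' =>
          obtain ⟨d1, hd1⟩ := single_form x hxt
          have hne : d1 = !d0 := by
            by_contra hdd
            have : d1 = d0 := by cases d0 <;> cases d1 <;> simp_all
            subst this
            have := x.inj [false] [true] [d1] hd0 hd1
            cases this
          refine ⟨some (Sum.inr (d0, slice x false d0 hd0, slice x true d1 hd1)),
            ext' (funext fun l => ?_)⟩
          cases l with
          | nil => rw [(Phi _).root_map, x.root_map]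
          | cons b t =>
              cases b with
              | false =>
                  simp only [Phi, glue_toFun_cons, Bool.xor_false, Option.bind_some,
                    Bool.cond_false]
                  exact glue_slice_eq x false d0 hd0 t
              | true =>
                  simp only [Phi, glue_toFun_cons, Bool.xor_true, Option.bind_some,
                    ← hne]
                  exact glue_slice_eq x true d1 hd1 t

theorem key (k : ℕ) : Rn' (k+1) = 4 * Rn' k + 4 * Rn' k * Nn k := by
  classical
  have hsum : ∑ e : Ety k, lrank (Phi e) = ∑ x : PartialAut (k+1), lrank x :=
    Fintype.sum_bijective Phi ⟨Phi_injective k, Phi_surjective k⟩ _ _ (fun e => rfl)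
  rw [Rn', ← hsum, Fintype.sum_option, Fintype.sum_sum_type, lrank_Phi_none]
  have h2 : ∑ p : (Bool × Bool) × PartialAut k, lrank (Phi (some (Sum.inl p)))
      = 4 * Rn' k := by
    rw [Fintype.sum_prod_type]
    have hq : ∀ q : Bool × Bool,
        ∑ y : PartialAut k, lrank (Phi (some (Sum.inl (q, y)))) = Rn' k := by
      intro q
      rw [Rn']
      exact Finset.sum_congr rfl fun y _ => lrank_Phi_inl q.1 q.2 y
    rw [Finset.sum_congr rfl fun q _ => hq q, Finset.sum_const, Finset.card_univ,
      smul_eq_mul]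
    norm_num
  have h3 : ∑ p : Bool × PartialAut k × PartialAut k, lrank (Phi (some (Sum.inr p)))
      = 4 * Rn' k * Nn k := by
    rw [Fintype.sum_prod_type]
    have hs : ∀ s : Bool,
        ∑ p : PartialAut k × PartialAut k, lrank (Phi (some (Sum.inr (s, p))))
          = 2 * Rn' k * Nn k := by
      intro s
      rw [Fintype.sum_prod_type]
      have hy : ∀ y0 : PartialAut k,
          ∑ y1 : PartialAut k, lrank (Phi (some (Sum.inr (s, y0, y1))))
            = Fintype.card (PartialAut k) * lrank y0 + Rn' k := by
        intro y0
        rw [Finset.sum_congr rfl fun y1 _ => lrank_Phi_inr s y0 y1,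
          Finset.sum_add_distrib, Finset.sum_const, Finset.card_univ, smul_eq_mul,
          Rn']
      rw [Finset.sum_congr rfl fun y0 _ => hy y0, Finset.sum_add_distrib,
        ← Finset.mul_sum, Finset.sum_const, Finset.card_univ, smul_eq_mul, ← Rn']
      rw [Nn, Nat.card_eq_fintype_card]
      ring
    rw [Finset.sum_congr rfl fun s _ => hs s, Finset.sum_const, Finset.card_univ,
      smul_eq_mul]
    rw [show (Fintype.card Bool) = 2 from rfl]
    ring
  rw [h2, h3]
  omega

end RecAux

/-- the total rank satisfies `R'_n = 4 R'_{n-1} + 4 R'_{n-1} N_{n-1}`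
for all `n ≥ 2`. -/
theorem totalRank_recursion (n : ℕ) (hn : 2 ≤ n) :
    Rn' n = 4 * Rn' (n - 1) + 4 * Rn' (n - 1) * Nn (n - 1) := by
  obtain ⟨k, rfl⟩ : ∃ k, n = k + 1 := ⟨n - 1, by omega⟩
  simp only [Nat.add_sub_cancel]
  exact RecAux.key k
end

section
/- For every partial automorphism x of the n-level binary rooted tree and every continuous function f on the closed unit disc D, |∫_D f dΞ_n − f(0)| ≤ 2 (max_{z ∈ D} |f(z)|) · rk_n(x) / 2^n, where Ξ_n is the uniform distribution on the eigenvalues of the action matrix A_x and rk_n(x) is the ultimate rank of x. -/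
open scoped BigOperators

section Aux

open Polynomial Matrix Finset

variable {n : ℕ}

theorem PartialAut.pow_toFun_add (x : PartialAut n) (a b : ℕ) (l : List Bool) :
    (x ^ (a + b)).toFun l = ((x ^ a).toFun l).bind (x ^ b).toFun := by
  rw [pow_add]; rfl

theorem PartialAut.toFun_none_mono (x : PartialAut n) {a b : ℕ} (h : a ≤ b) {l : List Bool}
    (hl : (x ^ a).toFun l = none) : (x ^ b).toFun l = none := by
  obtain ⟨c, rfl⟩ := Nat.exists_eq_add_of_le h
  rw [PartialAut.pow_toFun_add, hl]; rfl

/-- If `x^m` maps `l` to a survivor, then `l` is a survivor. -/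
theorem PartialAut.surv_pullback (x : PartialAut n) {m : ℕ} {l u : List Bool}
    (hl : l.length = n) (hu : u ∈ survSet x) (hx : (x ^ m).toFun l = some u) :
    l ∈ survSet x := by
  refine ⟨hl, fun k hk => ?_⟩
  rcases le_or_gt k m with h | h
  · intro hnone
    rw [x.toFun_none_mono h hnone] at hx
    cases hx
  · have hkm : (x ^ k).toFun l = (x ^ (k - m)).toFun u := by
      have hk' : k = m + (k - m) := by omega
      conv_lhs => rw [hk']
      rw [PartialAut.pow_toFun_add, hx]; rfl
    intro hnone
    rw [hkm] at hnone
    exact hu.2 (k - m) (by omega) hnone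

/-- If `l` is a survivor and `x l = u`, then `u` is a survivor. -/
theorem PartialAut.surv_forward (x : PartialAut n) {l u : List Bool}
    (hl : l ∈ survSet x) (hx : x.toFun l = some u) : u ∈ survSet x := by
  refine ⟨(x.length_map l u hx).trans hl.1, fun k hk => ?_⟩
  have h1 : (x ^ (1 + k)).toFun l = (x ^ k).toFun u := by
    rw [PartialAut.pow_toFun_add, pow_one, hx]; rfl
  intro hnone
  rw [hnone] at h1
  exact hl.2 (1 + k) (by omega) h1

open scoped Classical in
noncomputable def sb (x : PartialAut n) : Leaf n → Bool :=
  fun i => if i.1 ∈ survSet x then false else true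

theorem sb_false_iff (x : PartialAut n) (i : Leaf n) :
    sb x i = false ↔ i.1 ∈ survSet x := by
  classical
  unfold sb
  split <;> simp_all

theorem sb_true_iff (x : PartialAut n) (i : Leaf n) :
    sb x i = true ↔ ¬ i.1 ∈ survSet x := by
  rw [← sb_false_iff (x := x)]
  cases sb x i <;> simp

theorem actionMatrix_blockTriangular (x : PartialAut n) :
    (actionMatrix x).BlockTriangular (sb x) := by
  intro i j hij
  rw [Bool.lt_iff] at hij
  unfold actionMatrix
  rw [if_neg]
  intro hx
  have hj : j.1 ∈ survSet x := (sb_false_iff x j).mp hij.1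
  have : i.1 ∈ survSet x := by
    refine x.surv_pullback (m := 1) i.2 hj ?_
    rw [pow_one]; exact hx
  rw [(sb_false_iff x i).mpr this] at hij
  cases hij.2

theorem mulVec_none (x : PartialAut n) {w : Leaf n → ℂ} {i : Leaf n}
    (h : x.toFun i.1 = none) : (actionMatrix x).mulVec w i = 0 := by
  simp [Matrix.mulVec, dotProduct, actionMatrix, h]

theorem mulVec_some (x : PartialAut n) {w : Leaf n → ℂ} {i j : Leaf n}
    (h : x.toFun i.1 = some j.1) : (actionMatrix x).mulVec w i = w j := by
  simp only [Matrix.mulVec, dotProduct, actionMatrix, h]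
  rw [Finset.sum_eq_single j]
  · simp
  · intro b _ hb
    rw [if_neg, zero_mul]
    intro hbj
    exact hb (Subtype.ext (Option.some_injective _ hbj.symm))
  · intro hj
    exact absurd (Finset.mem_univ j) hj

/-- Entries of powers of the non-survivor diagonal block. -/
theorem nb_pow (x : PartialAut n) (m : ℕ) (i j : {i : Leaf n // sb x i = true}) :
    (((actionMatrix x).toSquareBlock (sb x) true) ^ m) i j =
      if (x ^ m).toFun i.1.1 = some j.1.1 then 1 else 0 := by
  induction m generalizing j with
  | zero =>
    rw [pow_zero, pow_zero, Matrix.one_apply]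
    have h1 : ((1 : PartialAut n).toFun i.1.1 = some j.1.1) ↔ i = j := by
      rw [PartialAut.one_toFun, if_pos (le_of_eq i.1.2)]
      constructor
      · intro h
        exact Subtype.ext (Subtype.ext (Option.some_injective _ h))
      · rintro rfl; rfl
    simp only [h1]
  | succ m ih =>
    rw [pow_succ, Matrix.mul_apply]
    have hsucc : (x ^ (m + 1)).toFun i.1.1 = ((x ^ m).toFun i.1.1).bind x.toFun := by
      rw [x.pow_toFun_add m 1]
      cases (x ^ m).toFun i.1.1 with
      | none => rfl
      | some u => simp [pow_one]
    cases hm : (x ^ m).toFun i.1.1 with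
    | none =>
      rw [hsucc, hm]
      simp only [Option.bind_none]
      rw [if_neg (by simp), Finset.sum_eq_zero]
      intro k _
      rw [ih k, hm, if_neg (by simp), zero_mul]
    | some u =>
      have hun : u.length = n := ((x ^ m).length_map i.1.1 u hm).trans i.1.2
      have huns : ¬ u ∈ survSet x := fun hs =>
        (sb_true_iff x i.1).mp i.2 (x.surv_pullback i.1.2 hs hm)
      set k₀ : {i : Leaf n // sb x i = true} :=
        ⟨⟨u, hun⟩, (sb_true_iff x ⟨u, hun⟩).mpr huns⟩ with hk₀
      rw [Finset.sum_eq_single k₀]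
      · rw [ih k₀, hm, hsucc, hm, Option.bind_some]
        have : ((some u : Option (List Bool)) = some k₀.1.1) := rfl
        rw [if_pos rfl, one_mul]
        show (if x.toFun u = some j.1.1 then (1:ℂ) else 0) = _
        rfl
      · intro b _ hb
        rw [ih b, hm, if_neg, zero_mul]
        intro hbu
        exact hb (Subtype.ext (Subtype.ext (Option.some_injective _ hbu.symm)))
      · intro h
        exact absurd (Finset.mem_univ k₀) h

theorem nb_nilpotent (x : PartialAut n) :
    IsNilpotent ((actionMatrix x).toSquareBlock (sb x) true) := by
  have hex : ∀ i : {i : Leaf n // sb x i = true}, ∃ m, (x ^ m).toFun i.1.1 = none := by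
    intro i
    have h := (sb_true_iff x i.1).mp i.2
    by_contra hc
    push_neg at hc
    exact h ⟨i.1.2, fun m hm => hc m⟩
  choose g hg using hex
  refine ⟨Finset.univ.sup g, ?_⟩
  ext i j
  rw [nb_pow, Matrix.zero_apply, if_neg]
  rw [x.toFun_none_mono (Finset.le_sup (Finset.mem_univ i)) (hg i)]
  simp

theorem nb_charpoly (x : PartialAut n) :
    ((actionMatrix x).toSquareBlock (sb x) true).charpoly =
      X ^ (Fintype.card {i : Leaf n // sb x i = true}) := by
  have h := Matrix.isNilpotent_charpoly_sub_pow_of_isNilpotent (nb_nilpotent x)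
  have h0 : ((actionMatrix x).toSquareBlock (sb x) true).charpoly
      - X ^ (Fintype.card {i : Leaf n // sb x i = true}) = 0 := h.eq_zero
  linear_combination h0

theorem urk_eq_card (x : PartialAut n) :
    urk x = Fintype.card {i : Leaf n // sb x i = false} := by
  have e : {i : Leaf n // sb x i = false} ≃ ↥(survSet x) :=
    { toFun := fun i => ⟨i.1.1, (sb_false_iff x i.1).mp i.2⟩
      invFun := fun s => ⟨⟨s.1, s.2.1⟩, (sb_false_iff x ⟨s.1, s.2.1⟩).mpr s.2⟩
      left_inv := fun i => Subtype.ext (Subtype.ext rfl)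
      right_inv := fun s => Subtype.ext rfl }
  rw [urk, ← Nat.card_eq_fintype_card, Nat.card_congr e.symm]

/-- A root of the characteristic polynomial admits an eigenvector. -/
theorem exists_eigenvector {ι : Type*} [Fintype ι] [DecidableEq ι] (A : Matrix ι ι ℂ)
    {μ : ℂ} (h : A.charpoly.IsRoot μ) :
    ∃ v : ι → ℂ, v ≠ 0 ∧ A.mulVec v = μ • v := by
  have h0 : ((charmatrix A).map (Polynomial.eval μ)).det = 0 := by
    have h' : Polynomial.eval μ (charmatrix A).det = 0 := h
    rwa [← Polynomial.coe_evalRingHom, RingHom.map_det, RingHom.mapMatrix_apply] at h'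
  have h1 : (charmatrix A).map (Polynomial.eval μ) = μ • (1 : Matrix ι ι ℂ) - A := by
    ext i j
    by_cases hij : i = j
    · subst hij
      simp [charmatrix_apply_eq, Matrix.one_apply]
    · simp [charmatrix_apply_ne _ _ _ hij, Matrix.one_apply_ne hij]
  rw [h1] at h0
  obtain ⟨v, hv0, hv⟩ := Matrix.exists_mulVec_eq_zero_iff.mpr h0
  refine ⟨v, hv0, ?_⟩
  rw [Matrix.sub_mulVec, sub_eq_zero, Matrix.smul_mulVec, Matrix.one_mulVec] at hv
  exact hv.symm

instance (n : ℕ) : Nonempty (Leaf n) := ⟨⟨List.replicate n true, List.length_replicate⟩⟩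

/-- Every eigenvalue of the action matrix lies in the closed unit disc. -/
theorem eig_abs_le_one (x : PartialAut n) {μ : ℂ} (h : μ ∈ eigenvalues x) :
    ‖μ‖ ≤ 1 := by
  have hroot : (actionMatrix x).charpoly.IsRoot μ :=
    (Polynomial.mem_roots ((actionMatrix x).charpoly_monic.ne_zero)).mp h
  obtain ⟨v, hv0, hv⟩ := exists_eigenvector (actionMatrix x) hroot
  obtain ⟨i, -, hi⟩ := Finset.exists_max_image Finset.univ (fun i => ‖v i‖)
    Finset.univ_nonempty
  have hvi : v i ≠ 0 := by
    obtain ⟨i₀, hi₀⟩ := Function.ne_iff.mp hv0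
    intro hzero
    have := hi i₀ (Finset.mem_univ i₀)
    rw [hzero] at this
    simp only [norm_zero] at this
    exact hi₀ (by simpa using le_antisymm this (norm_nonneg _))
  have heq : (actionMatrix x).mulVec v i = μ * v i := by
    rw [hv]; simp
  cases hx : x.toFun i.1 with
  | none =>
    rw [mulVec_none x hx] at heq
    have : μ = 0 := by
      rcases mul_eq_zero.mp heq.symm with h' | h'
      · exact h'
      · exact absurd h' hvi
    rw [this]; simp
  | some u =>
    have hun : u.length = n := (x.length_map i.1 u hx).trans i.2
    have heq2 : v (⟨u, hun⟩ : Leaf n) = μ * v i := by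
      rw [← mulVec_some x (w := v) (i := i) (j := ⟨u, hun⟩) hx]
      exact heq
    have hle : ‖μ‖ * ‖v i‖ ≤ 1 * ‖v i‖ := by
      rw [one_mul, ← norm_mul, ← heq2]
      exact hi _ (Finset.mem_univ _)
    exact le_of_mul_le_mul_right hle (norm_pos_iff.mpr hvi)

theorem card_leaf (n : ℕ) : Fintype.card (Leaf n) = 2 ^ n := by
  have e : Leaf n ≃ List.Vector Bool n :=
    { toFun := fun l => ⟨l.1, l.2⟩
      invFun := fun v => ⟨v.1, v.2⟩
      left_inv := fun _ => rfl
      right_inv := fun _ => rfl }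
  rw [Fintype.card_congr e, card_vector, Fintype.card_bool]

theorem card_eigenvalues (x : PartialAut n) :
    Multiset.card (eigenvalues x) = 2 ^ n := by
  have hsp := (Polynomial.splits_iff_card_roots
    (f := (actionMatrix x).charpoly)).mp (IsAlgClosed.splits _)
  rw [eigenvalues, hsp, Matrix.charpoly_natDegree_eq_dim, card_leaf]

theorem multiset_filter_bind {α β : Type*} (s : Multiset α) (f : α → Multiset β)
    (p : β → Prop) [DecidablePred p] :
    (s.bind f).filter p = s.bind (fun a => (f a).filter p) := by
  induction s using Multiset.induction_on with
  | empty => simp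
  | cons a s ih => simp [Multiset.filter_add, ih]

open scoped Classical in
theorem card_nonzero_eigenvalues (x : PartialAut n) :
    Multiset.card ((eigenvalues x).filter (fun a => a ≠ 0)) ≤ urk x := by
  classical
  have hbt := (actionMatrix_blockTriangular x).charpoly
  have hne : ∀ a ∈ Finset.image (sb x) Finset.univ,
      ((actionMatrix x).toSquareBlock (sb x) a).charpoly ≠ 0 :=
    fun a _ => (Matrix.charpoly_monic _).ne_zero
  have hprod : (∏ a ∈ Finset.image (sb x) Finset.univ,
      ((actionMatrix x).toSquareBlock (sb x) a).charpoly) ≠ 0 :=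
    Finset.prod_ne_zero_iff.mpr hne
  have hroots : (eigenvalues x) =
      (Finset.image (sb x) Finset.univ).val.bind
        (fun a => ((actionMatrix x).toSquareBlock (sb x) a).charpoly.roots) := by
    rw [eigenvalues, hbt]
    exact Polynomial.roots_prod _ _ hprod
  rw [hroots, multiset_filter_bind, Multiset.card_bind]
  have hbound : ∀ a ∈ Finset.image (sb x) Finset.univ,
      Multiset.card (Multiset.filter (fun a => a ≠ 0)
        ((actionMatrix x).toSquareBlock (sb x) a).charpoly.roots)
        ≤ if a = false then urk x else 0 := by
    intro a _
    cases a with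
    | false =>
      simp only [if_pos rfl]
      calc Multiset.card (Multiset.filter (fun a => a ≠ 0)
            ((actionMatrix x).toSquareBlock (sb x) false).charpoly.roots)
          ≤ Multiset.card ((actionMatrix x).toSquareBlock (sb x) false).charpoly.roots :=
            Multiset.card_le_card (Multiset.filter_le _ _)
        _ ≤ ((actionMatrix x).toSquareBlock (sb x) false).charpoly.natDegree :=
            Polynomial.card_roots' _
        _ = Fintype.card {i : Leaf n // sb x i = false} :=
            Matrix.charpoly_natDegree_eq_dim _
        _ = urk x := (urk_eq_card x).symm
    | true =>
      simp only [if_neg (by simp : ¬ (true = false))]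
      rw [nb_charpoly, Polynomial.roots_pow, Polynomial.roots_X, Nat.le_zero,
        Multiset.card_eq_zero, Multiset.filter_eq_nil]
      intro a ha
      have : a = 0 := by simpa using Multiset.mem_of_mem_nsmul ha
      simp [this]
  calc ((Finset.image (sb x) Finset.univ).val.map
        (Multiset.card ∘ fun a => Multiset.filter (fun a => a ≠ 0)
          ((actionMatrix x).toSquareBlock (sb x) a).charpoly.roots)).sum
      = ∑ a ∈ Finset.image (sb x) Finset.univ,
          Multiset.card (Multiset.filter (fun a => a ≠ 0)
            ((actionMatrix x).toSquareBlock (sb x) a).charpoly.roots) := rfl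
    _ ≤ ∑ a ∈ Finset.image (sb x) Finset.univ, (if a = false then urk x else 0) :=
        Finset.sum_le_sum hbound
    _ ≤ ∑ a ∈ ({false, true} : Finset Bool), (if a = false then urk x else 0) :=
        Finset.sum_le_sum_of_subset (by intro a _; cases a <;> simp)
    _ = urk x := by simp

theorem msum_sub (s : Multiset ℂ) (f g : ℂ → ℂ) :
    (s.map (fun a => f a - g a)).sum = (s.map f).sum - (s.map g).sum := by
  induction s using Multiset.induction_on with
  | empty => simp
  | cons a s ih =>
    simp only [Multiset.map_cons, Multiset.sum_cons, ih]
    ring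

end Aux

/-- for every partial automorphism `x` and every continuous `f` on the
closed unit disc `D` with maximum modulus `M` on `D`,
`|∫_D f dΞ_n − f(0)| ≤ 2 M rk_n(x) / 2^n`. -/
theorem pointwise_bound (n : ℕ) (x : PartialAut n) (f : ℂ → ℂ)
    (hf : ContinuousOn f (Metric.closedBall (0 : ℂ) 1)) (M : ℝ)
    (hM : IsGreatest ((fun z => ‖f z‖) '' Metric.closedBall (0 : ℂ) 1) M) :
    ‖specInt x f - f 0‖ ≤ 2 * M * (urk x : ℝ) / 2 ^ n := by
  classical
  set R := eigenvalues x with hRdef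
  have hcard : Multiset.card R = 2 ^ n := card_eigenvalues x
  have h2n : ((2 : ℂ) ^ n) ≠ 0 := pow_ne_zero _ two_ne_zero
  have h0mem : (0 : ℂ) ∈ Metric.closedBall (0 : ℂ) 1 := by
    simp [Metric.mem_closedBall]
  have hM0 : 0 ≤ M :=
    le_trans (norm_nonneg (f 0)) (hM.2 ⟨0, h0mem, rfl⟩)
  have hbound : ∀ μ ∈ R, ‖f μ‖ ≤ M := by
    intro μ hμ
    refine hM.2 ⟨μ, ?_, rfl⟩
    simpa [Metric.mem_closedBall, Complex.dist_eq] using eig_abs_le_one x hμ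
  have hconst : (R.map (fun _ => f 0)).sum = ((2 : ℂ) ^ n) * f 0 := by
    rw [Multiset.map_const', Multiset.sum_replicate, hcard, nsmul_eq_mul]
    push_cast
    ring
  have key : specInt x f - f 0 = ((2 : ℂ) ^ n)⁻¹ * (R.map (fun μ => f μ - f 0)).sum := by
    rw [msum_sub, hconst, specInt, mul_sub, ← hRdef]
    have : ((2 : ℂ) ^ n)⁻¹ * ((2 : ℂ) ^ n * f 0) = f 0 := by
      field_simp
    rw [this]
  have habs : ‖specInt x f - f 0‖
      = ((2 : ℝ) ^ n)⁻¹ * ‖(R.map (fun μ => f μ - f 0)).sum‖ := by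
    rw [key, norm_mul, norm_inv, norm_pow]
    norm_num
  have hsum : ‖(R.map (fun μ => f μ - f 0)).sum‖ ≤ (urk x : ℝ) * (2 * M) := by
    refine le_trans (norm_multiset_sum_le _) ?_
    rw [Multiset.map_map]
    set h : ℂ → ℝ := fun μ => ‖f μ - f 0‖ with hh
    have hsplit : R = R.filter (fun a => a ≠ 0) + R.filter (fun a => ¬ a ≠ 0) :=
      (Multiset.filter_add_not _ R).symm
    have hzero : ((R.filter (fun a => ¬ a ≠ 0)).map h).sum = 0 := by
      refine Multiset.sum_eq_zero ?_
      intro y hy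
      obtain ⟨a, ha, rfl⟩ := Multiset.mem_map.mp hy
      have ha0 : a = 0 := not_not.mp (Multiset.mem_filter.mp ha).2
      simp [hh, ha0]
    have hle : ((R.filter (fun a => a ≠ 0)).map h).sum
        ≤ Multiset.card (R.filter (fun a => a ≠ 0)) • (2 * M) := by
      have h1 : ((R.filter (fun a => a ≠ 0)).map h).sum
          ≤ Multiset.card ((R.filter (fun a => a ≠ 0)).map h) • (2 * M) := by
        apply Multiset.sum_le_card_nsmul
        intro y hy
        obtain ⟨a, ha, rfl⟩ := Multiset.mem_map.mp hy
        have haR : a ∈ R := Multiset.mem_of_mem_filter ha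
        calc ‖f a - f 0‖ ≤ ‖f a‖ + ‖f 0‖ := norm_sub_le _ _
          _ ≤ M + M := add_le_add (by simpa using hbound a haR)
              (by simpa using hM.2 ⟨0, h0mem, rfl⟩)
          _ = 2 * M := by ring
      rwa [Multiset.card_map] at h1
    calc ((Multiset.map (fun x => h x) R)).sum
        = ((R.filter (fun a => a ≠ 0)).map h).sum
          + ((R.filter (fun a => ¬ a ≠ 0)).map h).sum := by
          conv_lhs => rw [hsplit]
          rw [Multiset.map_add, Multiset.sum_add]
      _ = ((R.filter (fun a => a ≠ 0)).map h).sum := by rw [hzero, add_zero]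
      _ ≤ Multiset.card (R.filter (fun a => a ≠ 0)) • (2 * M) := hle
      _ ≤ (urk x : ℝ) * (2 * M) := by
          rw [nsmul_eq_mul]
          have := card_nonzero_eigenvalues x
          exact mul_le_mul_of_nonneg_right (by exact_mod_cast this) (by positivity)
  calc ‖specInt x f - f 0‖
      = ((2 : ℝ) ^ n)⁻¹ * ‖(R.map (fun μ => f μ - f 0)).sum‖ := habs
    _ ≤ ((2 : ℝ) ^ n)⁻¹ * ((urk x : ℝ) * (2 * M)) := by
        exact mul_le_mul_of_nonneg_left hsum (by positivity)
    _ = 2 * M * (urk x : ℝ) / 2 ^ n := by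
        rw [div_eq_mul_inv]
        ring
end
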